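/- arXiv:2503.08380 — 5 statements merged into one kernel-verified Lean document; each statement's English description precedes it below -/
import Mathlib

section
/- For every nonnegative integer n and all indices 𝐤 and 𝐥, one has σ_n(𝐤 * 𝐥) = ∑_{i=0}^{n} σ_i(𝐤) * σ_{n-i}(𝐥) in the vector space 𝓘. -/
/-- Indices: finite sequences of positive integers (modeled as lists of naturals). -/
abbrev Idx := List ℕ

/-- The ℚ-vector space 𝓘 on the set of indices. -/
abbrev Ical := Idx →₀ ℚ

/-- Auxiliary harmonic product on reversed lists (cons = append at the end). -/
noncomputable def harmAux : Idx → Idx → Ical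
  | [], l => Finsupp.single l 1
  | a :: k, [] => Finsupp.single (a :: k) 1
  | a :: k, b :: l =>
      Finsupp.mapDomain (a :: ·) (harmAux k (b :: l)) +
      Finsupp.mapDomain (b :: ·) (harmAux (a :: k) l) +
      Finsupp.mapDomain ((a + b) :: ·) (harmAux k l)
termination_by k l => k.length + l.length

/-- The harmonic (stuffle) product of two indices. -/
noncomputable def harm (k l : Idx) : Ical :=
  Finsupp.mapDomain List.reverse (harmAux k.reverse l.reverse)

/-- Bilinear extension of the harmonic product to 𝓘. -/
noncomputable def harmF (x y : Ical) : Ical :=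
  x.sum fun k c => y.sum fun l d => (c * d) • harm k l

/-- The map σₙ on indices. -/
noncomputable def sigma : ℕ → Idx → Ical
  | n, [] => if n = 0 then Finsupp.single [] 1 else 0
  | n, k :: ks =>
      ∑ a ∈ Finset.range (n + 1),
        ((k + a - 1).choose a : ℚ) •
          Finsupp.mapDomain (fun t => (k + a) :: t) (sigma (n - a) ks)

/-- Linear extension of σₙ to 𝓘. -/
noncomputable def sigmaL (n : ℕ) (x : Ical) : Ical :=
  x.sum fun k c => c • sigma n k

/-- The map ₘIₙ on indices. -/
noncomputable def mI (m n : ℕ) (ks : Idx) : Ical :=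
  ∑ i ∈ Finset.range (ks.length + 1),
    ((-1 : ℚ)) ^ ((ks.drop i).sum) •
      harmF (sigma m (ks.take i)) (sigma n ((ks.drop i).reverse))

/-- The index shuffle product ⧢̃ of two indices. -/
noncomputable def sh : Idx → Idx → Ical
  | [], l => Finsupp.single l 1
  | a :: k, [] => Finsupp.single (a :: k) 1
  | a :: k, b :: l =>
      Finsupp.mapDomain (a :: ·) (sh k (b :: l)) +
      Finsupp.mapDomain (b :: ·) (sh (a :: k) l)
termination_by k l => k.length + l.length

/-- The multiple zeta value of an index. -/
noncomputable def mzv (ks : List ℕ) : ℝ :=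
  ∑' f : {f : Fin ks.length → ℕ // StrictMono f ∧ ∀ i, 0 < f i},
    ∏ i, (1 / (f.1 i : ℝ) ^ ks.get i)

/-!
Writing `σ = ∑ₙ σₙ tⁿ`, the map `σ` substitutes every letter `k` by
`φ(k) = ∑ₗ C(k+l-1, l) tˡ (k+l)`, and a letter substitution respects the stuffle product as soon
as it turns the merged letter `a+b` into the merged product of `φ(a)` and `φ(b)`. Here this is
the Vandermonde identity `∑_{p+q=s} C(a+p-1, p) C(b+q-1, q) = C(a+b+s-1, s)`, i.e. the coefficients
of `(1-t)⁻ᵃ (1-t)⁻ᵇ = (1-t)⁻⁽ᵃ⁺ᵇ⁾`. Degree by degree, the identity then follows by induction on the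
total length of the two indices from the recursion of the stuffle product, after matching the
three terms of that recursion by reindexing the antidiagonal sums.
-/

open Finset

theorem PowerSeries.coeff_invOneSubPow (S : Type*) [CommRing S] (d n : ℕ) :
    coeff n (invOneSubPow S d).val = (d.multichoose n : S) := by
  cases d with
  | zero => cases n <;> simp [invOneSubPow_zero, coeff_one]
  | succ d =>
    rw [invOneSubPow_val_succ_eq_mk_add_choose, coeff_mk, Nat.multichoose_eq,
      Nat.add_right_comm, Nat.add_sub_cancel, Nat.choose_symm_add]

theorem Nat.sum_antidiagonal_multichoose_mul (a b s : ℕ) :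
    ∑ x ∈ antidiagonal s, a.multichoose x.1 * b.multichoose x.2 = (a + b).multichoose s := by
  apply Nat.cast_injective (R := ℤ)
  push_cast
  simp only [← PowerSeries.coeff_invOneSubPow, PowerSeries.invOneSubPow_add, Units.val_mul,
    PowerSeries.coeff_mul]

section Reindex

variable {M : Type*} [AddCommMonoid M]

theorem Finset.Nat.sum_antidiagonal_antidiagonal_fst (f : ℕ → ℕ → ℕ → M) (n : ℕ) :
    ∑ x ∈ antidiagonal n, ∑ y ∈ antidiagonal x.1, f y.1 y.2 x.2 =
      ∑ x ∈ antidiagonal n, ∑ y ∈ antidiagonal x.2, f x.1 y.1 y.2 := by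
  simp only [sum_sigma']
  apply sum_nbij' (fun x ↦ ⟨(x.2.1, x.2.2 + x.1.2), (x.2.2, x.1.2)⟩)
    (fun x ↦ ⟨(x.1.1 + x.2.1, x.2.2), (x.1.1, x.2.1)⟩) <;> aesop (add simp [add_assoc])

theorem Finset.Nat.sum_antidiagonal_antidiagonal_snd_comm (f : ℕ → ℕ → ℕ → M) (n : ℕ) :
    ∑ x ∈ antidiagonal n, ∑ y ∈ antidiagonal x.2, f x.1 y.1 y.2 =
      ∑ x ∈ antidiagonal n, ∑ y ∈ antidiagonal x.2, f y.1 x.1 y.2 := by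
  simp only [sum_sigma']
  apply sum_nbij' (fun x ↦ ⟨(x.2.1, x.1.1 + x.2.2), (x.1.1, x.2.2)⟩)
    (fun x ↦ ⟨(x.2.1, x.1.1 + x.2.2), (x.1.1, x.2.2)⟩) <;> aesop (add simp [add_left_comm])

theorem Finset.Nat.sum_antidiagonal_antidiagonal_antidiagonal (f : ℕ → ℕ → ℕ → ℕ → M) (n : ℕ) :
    ∑ x ∈ antidiagonal n, ∑ y ∈ antidiagonal x.1, ∑ z ∈ antidiagonal x.2, f y.1 y.2 z.1 z.2 =
      ∑ x ∈ antidiagonal n, ∑ y ∈ antidiagonal x.1, ∑ z ∈ antidiagonal x.2, f y.1 z.1 y.2 z.2 := by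
  simp only [sum_sigma']
  apply sum_nbij' (fun ⟨_, y, z⟩ ↦ ⟨(y.1 + z.1, y.2 + z.2), (y.1, z.1), (y.2, z.2)⟩)
    (fun ⟨_, y, z⟩ ↦ ⟨(y.1 + z.1, y.2 + z.2), (y.1, z.1), (y.2, z.2)⟩) <;>
    aesop (add simp [add_add_add_comm])

end Reindex

noncomputable def consLin (c : ℕ) : Ical →ₗ[ℚ] Ical := Finsupp.lmapDomain ℚ ℚ (c :: ·)

noncomputable def snocLin (c : ℕ) : Ical →ₗ[ℚ] Ical := Finsupp.lmapDomain ℚ ℚ (· ++ [c])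

noncomputable def reverseLin : Ical →ₗ[ℚ] Ical := Finsupp.lmapDomain ℚ ℚ List.reverse

noncomputable def sigmaLin (n : ℕ) : Ical →ₗ[ℚ] Ical := Finsupp.linearCombination ℚ (sigma n)

noncomputable def harmAuxLin : Ical →ₗ[ℚ] Ical →ₗ[ℚ] Ical :=
  Finsupp.linearCombination ℚ fun k ↦ Finsupp.linearCombination ℚ (harmAux k)

@[simp] lemma consLin_single (c : ℕ) (k : Idx) (r : ℚ) :
    consLin c (Finsupp.single k r) = Finsupp.single (c :: k) r :=
  Finsupp.mapDomain_single

@[simp] lemma snocLin_single (c : ℕ) (k : Idx) (r : ℚ) :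
    snocLin c (Finsupp.single k r) = Finsupp.single (k ++ [c]) r :=
  Finsupp.mapDomain_single

@[simp] lemma reverseLin_single (k : Idx) (r : ℚ) :
    reverseLin (Finsupp.single k r) = Finsupp.single k.reverse r :=
  Finsupp.mapDomain_single

@[simp] lemma sigmaLin_single (n : ℕ) (k : Idx) (r : ℚ) :
    sigmaLin n (Finsupp.single k r) = r • sigma n k :=
  Finsupp.linearCombination_single ℚ r k

@[simp] lemma harmAuxLin_single_single (k l : Idx) (r s : ℚ) :
    harmAuxLin (Finsupp.single k r) (Finsupp.single l s) = (r * s) • harmAux k l := by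
  simp [harmAuxLin, mul_smul, smul_comm r s]

lemma snocLin_consLin (c d : ℕ) (z : Ical) :
    snocLin c (consLin d z) = consLin d (snocLin c z) := by
  induction z using Finsupp.induction_linear with
  | zero => simp
  | add y z hy hz => simp [hy, hz]
  | single k r => simp

lemma reverseLin_consLin (c : ℕ) (z : Ical) :
    reverseLin (consLin c z) = snocLin c (reverseLin z) := by
  induction z using Finsupp.induction_linear with
  | zero => simp
  | add y z hy hz => simp [hy, hz]
  | single k r => simp

@[simp] lemma reverseLin_reverseLin (z : Ical) : reverseLin (reverseLin z) = z := by
  induction z using Finsupp.induction_linear with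
  | zero => simp
  | add y z hy hz => simp [hy, hz]
  | single k r => simp

lemma sigma_nil (n : ℕ) : sigma n [] = if n = 0 then Finsupp.single [] 1 else 0 := by
  rw [sigma]

lemma sigma_cons (n c : ℕ) (k : Idx) :
    sigma n (c :: k) =
      ∑ x ∈ antidiagonal n, (c.multichoose x.1 : ℚ) • consLin (c + x.1) (sigma x.2 k) := by
  rw [sigma, Nat.sum_antidiagonal_eq_sum_range_succ
    (fun i j ↦ (c.multichoose i : ℚ) • consLin (c + i) (sigma j k))]
  simp [Nat.multichoose_eq, consLin]

lemma sigma_append_singleton (c : ℕ) : ∀ (k : Idx) (n : ℕ),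
    sigma n (k ++ [c]) =
      ∑ x ∈ antidiagonal n, (c.multichoose x.1 : ℚ) • snocLin (c + x.1) (sigma x.2 k)
  | [], n => by
    rw [List.nil_append, sigma_cons]
    refine sum_congr rfl fun x _ ↦ ?_
    rw [sigma_nil]
    split_ifs <;> simp
  | d :: k, n => by
    simp only [List.cons_append, sigma_cons, sigma_append_singleton c k, map_sum, map_smul,
      smul_sum, snocLin_consLin]
    simp only [smul_comm (c.multichoose _ : ℚ)]
    exact Nat.sum_antidiagonal_antidiagonal_snd_comm (fun p j r ↦ (d.multichoose p : ℚ) •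
      (c.multichoose j : ℚ) • consLin (d + p) (snocLin (c + j) (sigma r k))) n

lemma sigma_reverse : ∀ (k : Idx) (n : ℕ), sigma n k.reverse = reverseLin (sigma n k)
  | [], n => by
    rw [List.reverse_nil, sigma_nil]
    split_ifs <;> simp
  | c :: k, n => by
    simp only [List.reverse_cons, sigma_append_singleton, sigma_reverse k, sigma_cons, map_sum,
      map_smul, reverseLin_consLin]

lemma sigmaLin_consLin (n c : ℕ) (z : Ical) :
    sigmaLin n (consLin c z) =
      ∑ x ∈ antidiagonal n, (c.multichoose x.1 : ℚ) • consLin (c + x.1) (sigmaLin x.2 z) := by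
  induction z using Finsupp.induction_linear with
  | zero => simp
  | add y z hy hz => simp [hy, hz, sum_add_distrib]
  | single k r => simp [sigma_cons, smul_sum, smul_comm r]

lemma sigmaLin_reverseLin (n : ℕ) (z : Ical) :
    sigmaLin n (reverseLin z) = reverseLin (sigmaLin n z) := by
  induction z using Finsupp.induction_linear with
  | zero => simp
  | add y z hy hz => simp [hy, hz]
  | single k r => simp [sigma_reverse]

lemma harmAux_nil_right (k : Idx) : harmAux k [] = Finsupp.single k 1 := by
  cases k <;> rw [harmAux]

lemma harmAux_cons_cons (a b : ℕ) (k l : Idx) :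
    harmAux (a :: k) (b :: l) =
      consLin a (harmAux k (b :: l)) + consLin b (harmAux (a :: k) l) +
        consLin (a + b) (harmAux k l) := by
  rw [harmAux]; rfl

lemma harmAuxLin_nil_left (y : Ical) : harmAuxLin (Finsupp.single [] 1) y = y := by
  induction y using Finsupp.induction_linear with
  | zero => simp
  | add y z hy hz => simp [hy, hz]
  | single l s => simp [harmAux]

lemma harmAuxLin_nil_right (x : Ical) : harmAuxLin x (Finsupp.single [] 1) = x := by
  induction x using Finsupp.induction_linear with
  | zero => simp
  | add x z hx hz => simp [hx, hz]
  | single l s => simp [harmAux_nil_right]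

lemma harmAuxLin_consLin_consLin (a b : ℕ) (x y : Ical) :
    harmAuxLin (consLin a x) (consLin b y) =
      consLin a (harmAuxLin x (consLin b y)) + consLin b (harmAuxLin (consLin a x) y) +
        consLin (a + b) (harmAuxLin x y) := by
  induction x using Finsupp.induction_linear with
  | zero => simp
  | add x z hx hz => simp only [map_add, LinearMap.add_apply, hx, hz]; abel
  | single k r =>
    induction y using Finsupp.induction_linear with
    | zero => simp
    | add y z hy hz => simp only [map_add, hy, hz]; abel
    | single l s => simp [harmAux_cons_cons]

lemma harmAuxLin_sum_consLin_sum_consLin {ι κ : Type*} (s : Finset ι) (t : Finset κ)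
    (α : ι → ℚ) (β : κ → ℚ) (a : ι → ℕ) (b : κ → ℕ) (x : ι → Ical) (y : κ → Ical) :
    harmAuxLin (∑ i ∈ s, α i • consLin (a i) (x i)) (∑ j ∈ t, β j • consLin (b j) (y j)) =
      ∑ i ∈ s, α i • consLin (a i) (harmAuxLin (x i) (∑ j ∈ t, β j • consLin (b j) (y j))) +
      ∑ j ∈ t, β j • consLin (b j) (harmAuxLin (∑ i ∈ s, α i • consLin (a i) (x i)) (y j)) +
      ∑ i ∈ s, ∑ j ∈ t, (α i * β j) • consLin (a i + b j) (harmAuxLin (x i) (y j)) := by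
  simp only [map_sum, map_smul, LinearMap.sum_apply, LinearMap.smul_apply,
    harmAuxLin_consLin_consLin, smul_add, sum_add_distrib, smul_sum, mul_smul]
  congr 1
  congr 1
  all_goals rw [sum_comm]; simp only [smul_comm (β _) (α _)]

lemma harmF_eq_reverseLin (x y : Ical) :
    harmF x y = reverseLin (harmAuxLin (reverseLin x) (reverseLin y)) := by
  have bilinear : harmF x y = (Finsupp.linearCombination ℚ fun k ↦
      Finsupp.linearCombination ℚ (harm k)) x y := by
    simp [harmF, Finsupp.linearCombination_apply, Finsupp.smul_sum, mul_smul]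
  rw [bilinear]
  clear bilinear
  induction x using Finsupp.induction_linear with
  | zero => simp
  | add x z hx hz => simp only [map_add, LinearMap.add_apply, hx, hz]
  | single k r =>
    induction y using Finsupp.induction_linear with
    | zero => simp
    | add y z hy hz => simp only [map_add, hy, hz]
    | single l s => simp [harm, mul_smul, smul_comm r s, reverseLin]

def SigmaDistribHarm (x y : Ical) : Prop :=
  ∀ n, sigmaLin n (harmAuxLin x y) =
    ∑ p ∈ antidiagonal n, harmAuxLin (sigmaLin p.1 x) (sigmaLin p.2 y)

lemma SigmaDistribHarm.consLin_consLin {a b : ℕ} {x y : Ical}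
    (h₁ : SigmaDistribHarm x (consLin b y)) (h₂ : SigmaDistribHarm (consLin a x) y)
    (h₃ : SigmaDistribHarm x y) :
    SigmaDistribHarm (consLin a x) (consLin b y) := by
  intro n
  have expand : ∀ i j, harmAuxLin (sigmaLin i (consLin a x)) (sigmaLin j (consLin b y)) =
      ∑ p ∈ antidiagonal i, (a.multichoose p.1 : ℚ) •
        consLin (a + p.1) (harmAuxLin (sigmaLin p.2 x) (sigmaLin j (consLin b y))) +
      ∑ q ∈ antidiagonal j, (b.multichoose q.1 : ℚ) •
        consLin (b + q.1) (harmAuxLin (sigmaLin i (consLin a x)) (sigmaLin q.2 y)) +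
      ∑ p ∈ antidiagonal i, ∑ q ∈ antidiagonal j,
        ((a.multichoose p.1 : ℚ) * b.multichoose q.1) •
          consLin (a + p.1 + (b + q.1)) (harmAuxLin (sigmaLin p.2 x) (sigmaLin q.2 y)) := by
    intro i j
    rw [sigmaLin_consLin i, sigmaLin_consLin j, harmAuxLin_sum_consLin_sum_consLin,
      ← sigmaLin_consLin, ← sigmaLin_consLin]
  rw [harmAuxLin_consLin_consLin, map_add, map_add, sigmaLin_consLin n a, sigmaLin_consLin n b,
    sigmaLin_consLin n (a + b)]
  simp only [h₁ _, h₂ _, h₃ _, expand, sum_add_distrib, map_sum, smul_sum]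
  congr 1
  congr 1
  · exact (Nat.sum_antidiagonal_antidiagonal_fst (fun p i j ↦ (a.multichoose p : ℚ) •
      consLin (a + p) (harmAuxLin (sigmaLin i x) (sigmaLin j (consLin b y)))) n).symm
  · exact (Nat.sum_antidiagonal_antidiagonal_snd_comm (fun i q j ↦ (b.multichoose q : ℚ) •
      consLin (b + q) (harmAuxLin (sigmaLin i (consLin a x)) (sigmaLin j y))) n).symm
  · rw [Nat.sum_antidiagonal_antidiagonal_antidiagonal (fun p i q j ↦
      ((a.multichoose p : ℚ) * b.multichoose q) •
        consLin (a + p + (b + q)) (harmAuxLin (sigmaLin i x) (sigmaLin j y))) n]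
    refine sum_congr rfl fun s _ ↦ ?_
    have vandermonde : ∑ p ∈ antidiagonal s.1, (a.multichoose p.1 : ℚ) * b.multichoose p.2 =
        (a + b).multichoose s.1 := by
      exact_mod_cast Nat.sum_antidiagonal_multichoose_mul a b s.1
    simp only [← vandermonde, sum_smul]
    rw [sum_comm]
    refine sum_congr rfl fun p hp ↦ ?_
    rw [HasAntidiagonal.mem_antidiagonal] at hp
    rw [show a + p.1 + (b + p.2) = a + b + s.1 by omega]

lemma sigmaDistribHarm_nil_left (y : Ical) : SigmaDistribHarm (Finsupp.single [] 1) y := by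
  intro n
  rw [harmAuxLin_nil_left, sum_eq_single (0, n)]
  · simp [sigma_nil, harmAuxLin_nil_left]
  · rintro ⟨i, j⟩ hmem hij
    have hi : i ≠ 0 := by rintro rfl; simp_all
    simp [sigma_nil, hi]
  · simp

lemma sigmaDistribHarm_nil_right (x : Ical) : SigmaDistribHarm x (Finsupp.single [] 1) := by
  intro n
  rw [harmAuxLin_nil_right, sum_eq_single (n, 0)]
  · simp [sigma_nil, harmAuxLin_nil_right]
  · rintro ⟨i, j⟩ hmem hij
    have hj : j ≠ 0 := by rintro rfl; simp_all
    simp [sigma_nil, hj]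
  · simp

lemma sigmaDistribHarm_single : ∀ k l : Idx,
    SigmaDistribHarm (Finsupp.single k 1) (Finsupp.single l 1)
  | [], l => sigmaDistribHarm_nil_left _
  | _ :: _, [] => sigmaDistribHarm_nil_right _
  | a :: k, b :: l => by
    have step := SigmaDistribHarm.consLin_consLin (a := a) (b := b)
      (x := Finsupp.single k 1) (y := Finsupp.single l 1)
    simp only [consLin_single] at step
    exact step (sigmaDistribHarm_single k (b :: l)) (sigmaDistribHarm_single (a :: k) l)
      (sigmaDistribHarm_single k l)
termination_by k l => k.length + l.length

theorem sigma_harm_general (n : ℕ) (k l : Idx) :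
    sigmaL n (harm k l)
      = ∑ i ∈ Finset.range (n + 1), harmF (sigma i k) (sigma (n - i) l) := by
  have sigmaL_eq : sigmaL n = sigmaLin n :=
    funext fun z ↦ (Finsupp.linearCombination_apply ℚ z).symm
  have harm_eq : harm k l =
      reverseLin (harmAuxLin (Finsupp.single k.reverse 1) (Finsupp.single l.reverse 1)) := by
    simp [harm, reverseLin]
  rw [sigmaL_eq, harm_eq, sigmaLin_reverseLin, sigmaDistribHarm_single, map_sum,
    ← Nat.sum_antidiagonal_eq_sum_range_succ (fun i j ↦ harmF (sigma i k) (sigma j l))]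
  refine sum_congr rfl fun p _ ↦ ?_
  simp [harmF_eq_reverseLin, sigma_reverse]

/-- σₙ(𝐤 * 𝐥) = ∑_{i=0}^{n} σᵢ(𝐤) * σ_{n-i}(𝐥). -/
theorem sigma_harm (n : ℕ) (k l : Idx) (hk : ∀ x ∈ k, 0 < x) (hl : ∀ x ∈ l, 0 < x) :
    sigmaL n (harm k l)
      = ∑ i ∈ Finset.range (n + 1), harmF (sigma i k) (sigma (n - i) l) :=
  sigma_harm_general n k l
end

section
/- For every index (k_1,…,k_r) of positive integers, one has {}_2I_0(k_1,…,k_r) = (-1)^{k_1+⋯+k_r} · {}_0I_2(k_r,…,k_1) in 𝓘. In particular, if k_1+⋯+k_r is even, then {}_2I_0(k_1,…,k_r) = I_2(k_r,…,k_1). -/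
/-!
Reindexing the sum defining `ₙIₘ(k_r,…,k_1)` by `i ↦ r - i` turns its `i`-th term into
`(-1)^(k_1+⋯+k_i) σₙ(k_r,…,k_{i+1}) * σₘ(k_1,…,k_i)`. By commutativity of the harmonic product
this is the `i`-th term of `ₘIₙ(k_1,…,k_r)` up to the sign `(-1)^(k_1+⋯+k_r)`, since
`(-1)^(2(k_1+⋯+k_i)) = 1`.
-/

theorem harmAux_comm : ∀ k l, harmAux k l = harmAux l k
  | [], [] => rfl
  | [], b :: l => by rw [harmAux, harmAux]
  | a :: k, [] => by rw [harmAux, harmAux]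
  | a :: k, b :: l => by
      rw [harmAux, harmAux, harmAux_comm k (b :: l), harmAux_comm (a :: k) l,
        harmAux_comm k l, Nat.add_comm a b]
      abel
termination_by k l => k.length + l.length

theorem harm_comm (k l : Idx) : harm k l = harm l k := by
  rw [harm, harm, harmAux_comm]

theorem harmF_comm (x y : Ical) : harmF x y = harmF y x := by
  rw [harmF, harmF, Finsupp.sum_comm]
  exact Finsupp.sum_congr fun _ _ => Finsupp.sum_congr fun _ _ => by
    rw [mul_comm, harm_comm]

theorem neg_one_pow_sum_mul_neg_one_pow_sum_take {R : Type*} [CommMonoid R] [HasDistribNeg R]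
    (ks : List ℕ) (i : ℕ) :
    (-1 : R) ^ ks.sum * (-1) ^ (ks.take i).sum = (-1) ^ (ks.drop i).sum := by
  rw [← List.sum_take_add_sum_drop ks i, pow_add, mul_right_comm, ← pow_add,
    Even.neg_one_pow ⟨_, rfl⟩, one_mul]

theorem mI_eq_neg_one_pow_smul_mI_reverse (m n : ℕ) (ks : Idx) :
    mI m n ks = (-1 : ℚ) ^ ks.sum • mI n m ks.reverse := by
  rw [mI, mI, Finset.smul_sum, List.length_reverse]
  conv_rhs => rw [← Finset.sum_range_reflect]
  refine Finset.sum_congr rfl fun i hi_mem => ?_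
  have hi : i ≤ ks.length := Nat.lt_succ_iff.mp (Finset.mem_range.mp hi_mem)
  have hlen : ks.length - (ks.length + 1 - 1 - i) = i := by omega
  rw [List.take_reverse, List.drop_reverse, hlen, List.reverse_reverse, List.sum_reverse,
    harmF_comm, smul_smul, neg_one_pow_sum_mul_neg_one_pow_sum_take]

theorem mI_two_zero_eq_general (ks : Idx) :
    mI 2 0 ks = ((-1 : ℚ)) ^ ks.sum • mI 0 2 ks.reverse ∧
    (Even ks.sum → mI 2 0 ks = mI 0 2 ks.reverse) := by
  have h := mI_eq_neg_one_pow_smul_mI_reverse 2 0 ks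
  exact ⟨h, fun he => by rw [h, he.neg_one_pow, one_smul]⟩

/-- ₂I₀(k₁,…,k_r) = (-1)^{k₁+⋯+k_r} · ₀I₂(k_r,…,k₁); in particular if the
weight is even then ₂I₀(k₁,…,k_r) = I₂(k_r,…,k₁). -/
theorem mI_two_zero_eq (ks : Idx) (hks : ∀ x ∈ ks, 0 < x) :
    mI 2 0 ks = ((-1 : ℚ)) ^ ks.sum • mI 0 2 ks.reverse ∧
    (Even ks.sum → mI 2 0 ks = mI 0 2 ks.reverse) :=
  mI_two_zero_eq_general ks
end

section
/- For a nonnegative integer n and positive integers a, b, one has (b) ⧢̃ ({a}^n) = ∑_{i=0}^{n} (-1)^i (ai+b) * ({a}^{n-i}) in 𝓘, where {a}^m denotes the index consisting of m copies of a. -/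
/-!
Both sides equal the sum of the indices obtained by inserting `b` into `{a}^n` at each of the
`n + 1` positions. For the shuffle this is immediate. For the harmonic product, `(c) * {a}^m`
is that sum plus the sum of the indices obtained by replacing one `a` by `c + a`; in the
alternating sum the latter terms cancel telescopically against the next summand, since
`a * (i + 1) + b = a * i + (a + b)`.
-/

open Finset

noncomputable def insertionsSum (a c m : ℕ) : Ical :=
  ∑ j ∈ range (m + 1), Finsupp.single (List.replicate j a ++ c :: List.replicate (m - j) a) 1

lemma insertionsSum_zero (a c : ℕ) : insertionsSum a c 0 = Finsupp.single [c] 1 := by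
  simp [insertionsSum]

lemma insertionsSum_succ (a c m : ℕ) :
    insertionsSum a c (m + 1) = Finsupp.single (c :: a :: List.replicate m a) 1
      + Finsupp.mapDomain (a :: ·) (insertionsSum a c m) := by
  rw [insertionsSum, sum_range_succ', insertionsSum, Finsupp.mapDomain_finsetSum, add_comm]
  congr 1
  refine sum_congr rfl fun j _ => ?_
  rw [Finsupp.mapDomain_single, Nat.add_sub_add_right]
  rfl

lemma mapDomain_reverse_insertionsSum (a c m : ℕ) :
    Finsupp.mapDomain List.reverse (insertionsSum a c m) = insertionsSum a c m := by
  rw [insertionsSum, Finsupp.mapDomain_finsetSum, ← sum_range_reflect]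
  refine sum_congr rfl fun j hj => ?_
  have hjm : j ≤ m := Nat.lt_succ_iff.mp (mem_range.mp hj)
  rw [Finsupp.mapDomain_single, Nat.add_sub_cancel, Nat.sub_sub_self hjm]
  simp

lemma sh_singleton_cons (c a : ℕ) (l : Idx) :
    sh [c] (a :: l) = Finsupp.single (c :: a :: l) 1 + Finsupp.mapDomain (a :: ·) (sh [c] l) := by
  rw [sh, sh, Finsupp.mapDomain_single]

lemma harmAux_singleton_cons (c a : ℕ) (l : Idx) :
    harmAux [c] (a :: l) = Finsupp.single (c :: a :: l) 1 + Finsupp.single ((c + a) :: l) 1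
      + Finsupp.mapDomain (a :: ·) (harmAux [c] l) := by
  rw [harmAux, harmAux, harmAux, Finsupp.mapDomain_single, Finsupp.mapDomain_single]
  abel

lemma sh_singleton_replicate (a c m : ℕ) :
    sh [c] (List.replicate m a) = insertionsSum a c m := by
  induction m with
  | zero => rw [List.replicate_zero, insertionsSum_zero, sh]
  | succ m ih => rw [List.replicate_succ, sh_singleton_cons, ih, insertionsSum_succ]

lemma harmAux_singleton_replicate_succ (a c m : ℕ) :
    harmAux [c] (List.replicate (m + 1) a) =
      insertionsSum a c (m + 1) + insertionsSum a (c + a) m := by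
  induction m with
  | zero =>
    rw [List.replicate_succ, harmAux_singleton_cons, List.replicate_zero, harmAux,
      insertionsSum_succ, insertionsSum_zero, insertionsSum_zero, Finsupp.mapDomain_single]
    ac_rfl
  | succ m ih =>
    rw [List.replicate_succ, harmAux_singleton_cons, ih, Finsupp.mapDomain_add,
      insertionsSum_succ a c (m + 1), insertionsSum_succ a (c + a) m]
    ac_rfl

lemma harm_singleton_replicate_succ (a c m : ℕ) :
    harm [c] (List.replicate (m + 1) a) =
      insertionsSum a c (m + 1) + insertionsSum a (c + a) m := by
  rw [harm, List.reverse_singleton, List.reverse_replicate, harmAux_singleton_replicate_succ,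
    Finsupp.mapDomain_add, mapDomain_reverse_insertionsSum, mapDomain_reverse_insertionsSum]

lemma sum_neg_one_pow_smul_harm_singleton_replicate (a n c : ℕ) :
    ∑ i ∈ range (n + 1), (-1 : ℚ) ^ i • harm [a * i + c] (List.replicate (n - i) a)
      = insertionsSum a c n := by
  induction n generalizing c with
  | zero => simp [harm, harmAux, insertionsSum_zero]
  | succ n ih =>
    have shift : ∀ i ∈ range (n + 1),
        (-1 : ℚ) ^ (i + 1) • harm [a * (i + 1) + c] (List.replicate (n + 1 - (i + 1)) a)
          = -((-1 : ℚ) ^ i • harm [a * i + (c + a)] (List.replicate (n - i) a)) := by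
      intro i _
      rw [pow_succ, mul_smul, neg_one_smul, smul_neg, Nat.add_sub_add_right,
        show a * (i + 1) + c = a * i + (c + a) by ring]
    rw [sum_range_succ', sum_congr rfl shift, sum_neg_distrib, ih, pow_zero, one_smul,
      mul_zero, zero_add, Nat.sub_zero, harm_singleton_replicate_succ]
    abel

theorem sh_single_replicate_general (n a b : ℕ) :
    sh [b] (List.replicate n a)
      = ∑ i ∈ Finset.range (n + 1),
          ((-1 : ℚ)) ^ i • harm [a * i + b] (List.replicate (n - i) a) := by
  rw [sh_singleton_replicate, sum_neg_one_pow_smul_harm_singleton_replicate]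

/-- (b) ⧢̃ ({a}ⁿ) = ∑_{i=0}^{n} (-1)ⁱ (ai+b) * ({a}^{n-i}). -/
theorem sh_single_replicate (n a b : ℕ) (ha : 0 < a) (hb : 0 < b) :
    sh [b] (List.replicate n a)
      = ∑ i ∈ Finset.range (n + 1),
          ((-1 : ℚ)) ^ i • harm [a * i + b] (List.replicate (n - i) a) :=
  sh_single_replicate_general n a b
end

section
/- For a nonnegative integer n and positive integers a, b, one has (b,b) ⧢̃ ({a}^n) = ∑_{i,j≥0, i+j≤n} (-1)^{i+j} (ai+b, aj+b) * ({a}^{n-i-j}) in 𝓘. -/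
noncomputable def snocL (t : ℕ) : Ical →ₗ[ℚ] Ical :=
  Finsupp.lmapDomain ℚ ℚ (· ++ [t])

lemma snocL_apply (t : ℕ) (u : Ical) : snocL t u = Finsupp.mapDomain (· ++ [t]) u := rfl

lemma snocL_single (t : ℕ) (l : Idx) :
    snocL t (Finsupp.single l 1) = Finsupp.single (l ++ [t]) 1 :=
  Finsupp.mapDomain_single

lemma mapDomain_cons_snocL (c t : ℕ) (u : Ical) :
    Finsupp.mapDomain (c :: ·) (snocL t u) = snocL t (Finsupp.mapDomain (c :: ·) u) := by
  simp only [snocL_apply, ← Finsupp.mapDomain_comp]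
  rfl

lemma mapDomain_reverse_cons (t : ℕ) (u : Ical) :
    Finsupp.mapDomain List.reverse (Finsupp.mapDomain (t :: ·) u)
      = snocL t (Finsupp.mapDomain List.reverse u) := by
  simp only [snocL_apply, ← Finsupp.mapDomain_comp]
  congr 1
  funext l
  simp

lemma harm_nil_left (l : Idx) : harm [] l = Finsupp.single l 1 := by
  simp [harm, harmAux, Finsupp.mapDomain_single]

lemma harm_nil_right (k : Idx) : harm k [] = Finsupp.single k 1 := by
  cases h : k.reverse <;> simp_all [harm, harmAux, Finsupp.mapDomain_single]

lemma harm_append_singleton (k l : Idx) (x y : ℕ) :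
    harm (k ++ [x]) (l ++ [y])
      = snocL x (harm k (l ++ [y])) + snocL y (harm (k ++ [x]) l)
        + snocL (x + y) (harm k l) := by
  simp only [harm, List.reverse_append, List.reverse_cons, List.reverse_nil, List.nil_append,
    List.cons_append]
  rw [harmAux, Finsupp.mapDomain_add, Finsupp.mapDomain_add, mapDomain_reverse_cons,
    mapDomain_reverse_cons, mapDomain_reverse_cons]

lemma sh_nil_left (l : Idx) : sh [] l = Finsupp.single l 1 := by
  rw [sh]

lemma sh_nil_right (k : Idx) : sh k [] = Finsupp.single k 1 := by
  cases k <;> simp [sh]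

lemma sh_cons_cons (x y : ℕ) (k l : Idx) :
    sh (x :: k) (y :: l)
      = Finsupp.mapDomain (x :: ·) (sh k (y :: l)) + Finsupp.mapDomain (y :: ·) (sh (x :: k) l) := by
  rw [sh]

lemma sh_append_singleton (k l : Idx) (x y : ℕ) :
    sh (k ++ [x]) (l ++ [y]) = snocL x (sh k (l ++ [y])) + snocL y (sh (k ++ [x]) l) := by
  induction k generalizing l with
  | nil =>
    induction l with
    | nil =>
      simp only [List.nil_append, sh_cons_cons, sh_nil_left, sh_nil_right,
        Finsupp.mapDomain_single, snocL_single, List.singleton_append]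
      abel
    | cons c l ih =>
      simp only [List.nil_append, List.cons_append] at ih ⊢
      rw [sh_cons_cons, ih, sh_cons_cons x c [] l]
      simp only [sh_nil_left, map_add, Finsupp.mapDomain_add, mapDomain_cons_snocL,
        Finsupp.mapDomain_single, snocL_single, List.cons_append]
      abel
  | cons c k ihk =>
    induction l with
    | nil =>
      have ih := ihk []
      simp only [List.nil_append, List.cons_append] at ih ⊢
      rw [sh_cons_cons, ih, sh_cons_cons c y k []]
      simp only [sh_nil_right, map_add, Finsupp.mapDomain_add, mapDomain_cons_snocL,
        Finsupp.mapDomain_single, snocL_single, List.cons_append]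
      abel
    | cons d l ihl =>
      have ih := ihk (d :: l)
      simp only [List.cons_append] at ih ihl ⊢
      rw [sh_cons_cons, ih, ihl, sh_cons_cons c d k (l ++ [y]), sh_cons_cons c d (k ++ [x]) l]
      simp only [map_add, Finsupp.mapDomain_add, mapDomain_cons_snocL]
      abel

section AlternatingSum

variable (a b : ℕ)

noncomputable def altHarm (k : Idx) (n : ℕ) : Ical :=
  ∑ j ∈ Finset.range (n + 1), (-1 : ℚ) ^ j • harm (k ++ [a * j + b]) (List.replicate (n - j) a)

lemma altHarm_zero (k : Idx) : altHarm a b k 0 = snocL b (harm k []) := by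
  simp [altHarm, harm_nil_right, snocL_single]

/-- The merged letters `a j + b + a` produced by the harmonic product cancel, up to sign, the
last letters of the next summand; only the `j = 0` term survives. -/
lemma altHarm_succ (k : Idx) (n : ℕ) :
    altHarm a b k (n + 1)
      = snocL b (harm k (List.replicate (n + 1) a)) + snocL a (altHarm a b k n) := by
  set g : ℕ → Ical := fun j =>
    (-1 : ℚ) ^ j • snocL (a * j + b) (harm k (List.replicate (n + 1 - j) a)) with hg
  have hterm : ∀ j ∈ Finset.range (n + 1),
      (-1 : ℚ) ^ j • harm (k ++ [a * j + b]) (List.replicate (n + 1 - j) a)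
        = (g j - g (j + 1))
          + snocL a ((-1 : ℚ) ^ j • harm (k ++ [a * j + b]) (List.replicate (n - j) a)) := by
    intro j hj
    have hjn : n + 1 - j = n - j + 1 := by
      have := Finset.mem_range.mp hj
      omega
    have hnext : g (j + 1)
        = -((-1 : ℚ) ^ j • snocL (a * j + b + a) (harm k (List.replicate (n - j) a))) := by
      simp only [hg]
      rw [Nat.add_sub_add_right, pow_succ, mul_neg_one, neg_smul, mul_add_one,
        add_right_comm (a * j) a b]
    rw [hnext, hjn, List.replicate_succ', harm_append_singleton]
    simp only [hg, hjn, List.replicate_succ', map_smul, smul_add]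
    abel
  have hlast : (-1 : ℚ) ^ (n + 1) • harm (k ++ [a * (n + 1) + b]) (List.replicate (n + 1 - (n + 1)) a)
      = g (n + 1) := by
    simp [hg, harm_nil_right, snocL_single]
  rw [altHarm, Finset.sum_range_succ, hlast, Finset.sum_congr rfl hterm, Finset.sum_add_distrib,
    Finset.sum_range_sub', altHarm, map_sum]
  simp only [hg, pow_zero, mul_zero, zero_add, tsub_zero, one_smul, tsub_self,
    List.replicate_zero, map_smul]
  abel

lemma sh_singleton_replicate_s8 (n : ℕ) :
    sh [b] (List.replicate n a) = altHarm a b [] n := by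
  induction n with
  | zero => simp [altHarm_zero, sh_nil_right, harm_nil_right, snocL_single]
  | succ n ih =>
    rw [altHarm_succ, ← ih, harm_nil_left, List.replicate_succ',
      show ([b] : Idx) = [] ++ [b] from rfl, sh_append_singleton, sh_nil_left]

lemma sh_pair_replicate_eq_sum_altHarm (n : ℕ) :
    sh [b, b] (List.replicate n a)
      = ∑ i ∈ Finset.range (n + 1), (-1 : ℚ) ^ i • altHarm a b [a * i + b] (n - i) := by
  induction n with
  | zero => simp [altHarm_zero, sh_nil_right, harm_nil_right, snocL_single]
  | succ n ih =>
    have hstep : ∀ i ∈ Finset.range (n + 1),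
        (-1 : ℚ) ^ i • altHarm a b [a * i + b] (n + 1 - i)
          = snocL b ((-1 : ℚ) ^ i • harm [a * i + b] (List.replicate (n + 1 - i) a))
            + snocL a ((-1 : ℚ) ^ i • altHarm a b [a * i + b] (n - i)) := by
      intro i hi
      have hin : n + 1 - i = n - i + 1 := by
        have := Finset.mem_range.mp hi
        omega
      rw [hin, altHarm_succ, smul_add, map_smul, map_smul]
    rw [Finset.sum_range_succ, Finset.sum_congr rfl hstep, Finset.sum_add_distrib, ← map_sum,
      ← map_sum, ← ih, Nat.sub_self, altHarm_zero, List.replicate_succ',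
      show ([b, b] : Idx) = [b] ++ [b] from rfl, sh_append_singleton, ← List.replicate_succ',
      sh_singleton_replicate_s8, altHarm, Finset.sum_range_succ]
    simp only [List.nil_append, Nat.sub_self, List.replicate_zero, map_add, map_smul]
    abel

end AlternatingSum

theorem sh_pair_replicate_general (n a b : ℕ) :
    sh [b, b] (List.replicate n a)
      = ∑ i ∈ Finset.range (n + 1), ∑ j ∈ Finset.range (n + 1 - i),
          ((-1 : ℚ)) ^ (i + j) •
            harm [a * i + b, a * j + b] (List.replicate (n - i - j) a) := by
  rw [sh_pair_replicate_eq_sum_altHarm]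
  refine Finset.sum_congr rfl fun i hi => ?_
  have hin : n - i + 1 = n + 1 - i := by
    have := Finset.mem_range.mp hi
    omega
  rw [altHarm, hin, Finset.smul_sum]
  refine Finset.sum_congr rfl fun j _ => ?_
  rw [pow_add, mul_smul, Nat.sub_sub]
  rfl

/-- (b,b) ⧢̃ ({a}ⁿ) = ∑_{i+j≤n} (-1)^{i+j} (ai+b, aj+b) * ({a}^{n-i-j}). -/
theorem sh_pair_replicate (n a b : ℕ) (ha : 0 < a) (hb : 0 < b) :
    sh [b, b] (List.replicate n a)
      = ∑ i ∈ Finset.range (n + 1), ∑ j ∈ Finset.range (n + 1 - i),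
          ((-1 : ℚ)) ^ (i + j) •
            harm [a * i + b, a * j + b] (List.replicate (n - i - j) a) :=
  sh_pair_replicate_general n a b
end

section
/- For every nonnegative integer n, the multiple zeta value ζ({4}^n) := ∑_{0<n_1<⋯<n_n} 1/(n_1^4 ⋯ n_n^4) equals 2^{2n+1} π^{4n} / (4n+2)!. -/
/-!
Shifting the summation variables by one, ζ({4}ⁿ) is the n-th elementary symmetric function of the
numbers 1/k⁴, so ∑ₙ ζ({4}ⁿ) xⁿ = ∏ₖ (1 + x/k⁴). For x = 4s⁴ and z = s(1 + i) each factor splits as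
(1 - z²/k²)(1 - (iz)²/k²), and Euler's sine product turns the product into
sin(πz) sin(πiz) / (π² i z²) = (cosh 2πs - cos 2πs) / (4π²s²). The Taylor series of cosh y - cos y
has only the terms 2y^{4n+2}/(4n+2)!, and comparing coefficients of the two power series in x gives
the closed form.
-/

open Finset Filter Topology FormalMultilinearSeries Nat
open scoped Real ENNReal

def posStrictMonoEquiv (n : ℕ) :
    {f : Fin n → ℕ // StrictMono f ∧ ∀ i, 0 < f i} ≃ (Fin n ↪o ℕ) where
  toFun f := OrderEmbedding.ofStrictMono (f.1 · - 1) fun i j hij =>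
    show f.1 i - 1 < f.1 j - 1 from Nat.sub_lt_sub_right (f.2.2 i) (f.2.1 hij)
  invFun g := ⟨(g · + 1), fun i j hij => by simpa using g.strictMono hij, fun _ => Nat.succ_pos _⟩
  left_inv f := Subtype.ext <| funext fun i => Nat.sub_add_cancel (f.2.2 i)
  right_inv g := by ext; simp

theorem mzv_eq_tsum_powersetCard (ks : List ℕ) (k : ℕ) (hk : ∀ i, ks.get i = k) :
    mzv ks = ∑' s : Set.powersetCard ℕ ks.length, ∏ j ∈ s.val, 1 / ((j : ℝ) + 1) ^ k := by
  rw [mzv, ← ((posStrictMonoEquiv _).trans Set.powersetCard.ofFinEmbEquiv).tsum_eq]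
  refine tsum_congr fun f => ?_
  rw [Equiv.trans_apply, Set.powersetCard.ofFinEmbEquiv_apply, Set.powersetCard.val_ofFinEmb,
    prod_map]
  refine prod_congr rfl fun i _ => ?_
  change _ = 1 / (((f.1 i - 1 : ℕ) : ℝ) + 1) ^ k
  rw [← Nat.cast_add_one, Nat.sub_add_cancel (f.2.2 i), hk]

theorem hasSum_prod_of_tendsto_prod_one_add {g : ℕ → ℝ} (hg : ∀ k, 0 ≤ g k) {P : ℝ}
    (hP : Tendsto (fun N => ∏ k ∈ range N, (1 + g k)) atTop (𝓝 P)) :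
    HasSum (fun s : Finset ℕ => ∏ k ∈ s, g k) P := by
  have hmono : Monotone fun N => ∏ k ∈ range N, (1 + g k) := by
    refine monotone_nat_of_le_succ fun N => ?_
    rw [prod_range_succ]
    exact le_mul_of_one_le_right (prod_nonneg fun k _ => by linarith [hg k])
      (by linarith [hg N])
  have hsum : Summable fun s : Finset ℕ => ∏ k ∈ s, g k := by
    refine summable_of_sum_le (c := P) (fun s => prod_nonneg fun k _ => hg k) fun u => ?_
    obtain ⟨N, hN⟩ := exists_nat_subset_range (u.sup id)
    calc ∑ s ∈ u, ∏ k ∈ s, g k ≤ ∑ s ∈ (range N).powerset, ∏ k ∈ s, g k :=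
          sum_le_sum_of_subset_of_nonneg
            (fun s hs => mem_powerset.2 ((le_sup (f := id) hs).trans hN))
            fun s _ _ => prod_nonneg fun k _ => hg k
      _ = ∏ k ∈ range N, (1 + g k) := (prod_one_add _).symm
      _ ≤ P := hmono.ge_of_tendsto hP N
  have hprod := (hasProd_one_add_of_hasSum_prod hsum.hasSum).tendsto_prod_nat
  exact tendsto_nhds_unique hprod hP ▸ hsum.hasSum

theorem hasSum_tsum_powersetCard_prod_mul_pow {c : ℕ → ℝ} (hc : ∀ k, 0 ≤ c k) {x P : ℝ}
    (hx : 0 ≤ x) (hP : Tendsto (fun N => ∏ k ∈ range N, (1 + x * c k)) atTop (𝓝 P)) :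
    HasSum (fun n => (∑' s : Set.powersetCard ℕ n, ∏ k ∈ s.val, c k) * x ^ n) P := by
  have hall := (Set.powersetCard.prodEquiv.hasSum_iff).2
    (hasSum_prod_of_tendsto_prod_one_add (fun k => mul_nonneg hx (hc k)) hP)
  refine hall.sigma fun n => ?_
  have hfib := (hall.summable.sigma_factor n).hasSum
  have hterm (s : Set.powersetCard ℕ n) : ∏ k ∈ s.val, x * c k = x ^ n * ∏ k ∈ s.val, c k := by
    rw [prod_mul_distrib, prod_const, s.prop]
  simp only [Function.comp_apply, Set.powersetCard.prodEquiv_apply, hterm, tsum_mul_left] at hfib ⊢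
  rwa [mul_comm]

theorem Complex.tendsto_prod_one_sub_pow_four (z : ℂ) :
    Tendsto (fun N => π ^ 2 * I * z ^ 2 * ∏ k ∈ range N, (1 - z ^ 4 / ((k : ℂ) + 1) ^ 4)) atTop
      (𝓝 (sin (π * z) * sin (π * (I * z)))) := by
  refine ((tendsto_euler_sin_prod z).mul (tendsto_euler_sin_prod (I * z))).congr fun N => ?_
  have hfactor (k : ℕ) : (1 - z ^ 2 / ((k : ℂ) + 1) ^ 2) * (1 - (I * z) ^ 2 / ((k : ℂ) + 1) ^ 2)
      = 1 - z ^ 4 / ((k : ℂ) + 1) ^ 4 := by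
    have : (k : ℂ) + 1 ≠ 0 := Nat.cast_add_one_ne_zero k
    field_simp
    linear_combination (z ^ 4 - z ^ 2 * ((k : ℂ) + 1) ^ 2) * I_sq
  calc _ = π ^ 2 * I * z ^ 2 * ∏ k ∈ range N,
        (1 - z ^ 2 / ((k : ℂ) + 1) ^ 2) * (1 - (I * z) ^ 2 / ((k : ℂ) + 1) ^ 2) := by
        rw [prod_mul_distrib]; ring
    _ = _ := by simp_rw [hfactor]

theorem tendsto_prod_one_add_four_mul_pow_four {s : ℝ} (hs : s ≠ 0) :
    Tendsto (fun N => ∏ k ∈ range N, (1 + 4 * s ^ 4 * (1 / ((k : ℝ) + 1) ^ 4))) atTop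
      (𝓝 ((Real.cosh (2 * π * s) - Real.cos (2 * π * s)) / (4 * π ^ 2 * s ^ 2))) := by
  obtain ⟨z, hz⟩ : ∃ z : ℂ, z = s * (1 + Complex.I) := ⟨_, rfl⟩
  have hz2 : z ^ 2 = 2 * Complex.I * s ^ 2 := by
    rw [hz]; linear_combination (s : ℂ) ^ 2 * Complex.I_sq
  have hz4 : z ^ 4 = -4 * s ^ 4 := by
    rw [show z ^ 4 = (z ^ 2) ^ 2 by ring, hz2]; linear_combination 4 * (s : ℂ) ^ 4 * Complex.I_sq
  have hsin : Complex.sin (π * z) * Complex.sin (π * (Complex.I * z))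
      = ((Real.cos (2 * π * s) - Real.cosh (2 * π * s)) / 2 : ℝ) := by
    have hsub : π * z - π * (Complex.I * z) = (2 * π * s : ℝ) := by
      rw [hz]; push_cast; linear_combination -(π * s : ℂ) * Complex.I_sq
    have hadd : π * z + π * (Complex.I * z) = (2 * π * s : ℝ) * Complex.I := by
      rw [hz]; push_cast; linear_combination (π * s : ℂ) * Complex.I_sq
    have hcos := congrArg₂ (· - ·) (congrArg Complex.cos hsub) (congrArg Complex.cos hadd)
    simp only [Complex.cos_sub, Complex.cos_add, Complex.cos_mul_I, ← Complex.ofReal_cos,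
      ← Complex.ofReal_cosh] at hcos
    rw [Complex.ofReal_div, Complex.ofReal_sub, Complex.ofReal_ofNat]
    linear_combination hcos / 2
  have hprod (N : ℕ) : π ^ 2 * Complex.I * z ^ 2 * ∏ k ∈ range N, (1 - z ^ 4 / ((k : ℂ) + 1) ^ 4)
      = (-(2 * π ^ 2 * s ^ 2) * ∏ k ∈ range N, (1 + 4 * s ^ 4 * (1 / ((k : ℝ) + 1) ^ 4)) : ℝ) := by
    have hscalar : (π : ℂ) ^ 2 * Complex.I * z ^ 2 = -(2 * π ^ 2 * s ^ 2) := by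
      rw [hz2]; linear_combination (2 * π ^ 2 * s ^ 2 : ℂ) * Complex.I_sq
    rw [hscalar, hz4]
    push_cast
    congr 1
    exact prod_congr rfl fun k _ => by ring
  have hreal := Filter.tendsto_ofReal_iff.1 (by
    simpa only [hprod, hsin] using Complex.tendsto_prod_one_sub_pow_four z)
  have hc : -(2 * π ^ 2 * s ^ 2) ≠ 0 := neg_ne_zero.2 (by positivity)
  have hlim : (-(2 * π ^ 2 * s ^ 2))⁻¹ * ((Real.cos (2 * π * s) - Real.cosh (2 * π * s)) / 2)
      = (Real.cosh (2 * π * s) - Real.cos (2 * π * s)) / (4 * π ^ 2 * s ^ 2) := by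
    field_simp
    ring
  exact hlim ▸ (hreal.const_mul _).congr fun N => inv_mul_cancel_left₀ hc _

theorem Real.hasSum_cosh_sub_cos (y : ℝ) :
    HasSum (fun n => 2 * y ^ (4 * n + 2) / (4 * n + 2)!) (cosh y - cos y) := by
  have hodd : Function.Injective (fun n : ℕ => 2 * n + 1) := fun a b h => by simp_all
  have hvanish (m : ℕ) (hm : m ∉ Set.range (fun n : ℕ => 2 * n + 1)) :
      y ^ (2 * m) / (2 * m)! - (-1) ^ m * y ^ (2 * m) / (2 * m)! = 0 := by
    obtain ⟨k, rfl | rfl⟩ := m.even_or_odd'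
    · simp [pow_mul]
    · exact absurd ⟨k, rfl⟩ hm
  convert (hodd.hasSum_iff hvanish).2 ((hasSum_cosh y).sub (hasSum_cos y)) using 1
  funext n
  rw [Function.comp_apply, show 2 * (2 * n + 1) = 4 * n + 2 by ring,
    (odd_two_mul_add_one n).neg_one_pow]
  ring

theorem hasSum_cosh_sub_cos_two_pi_div_sq {s : ℝ} (hs : s ≠ 0) :
    HasSum (fun n => 2 ^ (2 * n + 1) * π ^ (4 * n) / (4 * n + 2)! * (4 * s ^ 4) ^ n)
      ((Real.cosh (2 * π * s) - Real.cos (2 * π * s)) / (4 * π ^ 2 * s ^ 2)) := by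
  refine ((Real.hasSum_cosh_sub_cos (2 * π * s)).div_const _).congr_fun fun n => ?_
  rw [mul_pow, show (4 : ℝ) ^ n = 2 ^ (2 * n) by rw [pow_mul]; norm_num]
  field_simp
  ring

theorem FormalMultilinearSeries.ofScalars_radius_eq_top_of_summable {c : ℕ → ℝ}
    (hc : ∀ x > 0, Summable fun n => c n * x ^ n) : (ofScalars ℝ c).radius = ⊤ := by
  refine ENNReal.eq_top_of_forall_nnreal_le fun r => ?_
  have hr : (r : ℝ≥0∞) ≤ (r + 1 : NNReal) := by exact_mod_cast le_add_of_nonneg_right zero_le_one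
  refine hr.trans (le_radius_of_summable _ ?_)
  have hpos : (0 : ℝ) < r + 1 := by positivity
  simpa [ofScalars_norm, abs_mul, abs_pow, abs_of_pos hpos] using (hc _ hpos).abs

theorem eq_of_hasSum_pow_of_pos {a b : ℕ → ℝ} {f : ℝ → ℝ}
    (ha : ∀ x > 0, HasSum (fun n => a n * x ^ n) (f x))
    (hb : ∀ x > 0, HasSum (fun n => b n * x ^ n) (f x)) : a = b := by
  have hball {c : ℕ → ℝ} (hc : ∀ x > 0, HasSum (fun n => c n * x ^ n) (f x)) :
      HasFPowerSeriesOnBall (ofScalarsSum c) (ofScalars ℝ c) 0 ⊤ := by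
    have := ofScalars_radius_eq_top_of_summable fun x hx => (hc x hx).summable
    exact this ▸ (ofScalars ℝ c).hasFPowerSeriesOnBall (this ▸ ENNReal.zero_lt_top)
  have hf {c : ℕ → ℝ} (hc : ∀ x > 0, HasSum (fun n => c n * x ^ n) (f x)) :
      ofScalarsSum c =ᶠ[𝓝 1] f := by
    filter_upwards [lt_mem_nhds one_pos] with x hx
    rw [ofScalars_sum_eq]
    exact (hc x hx).tsum_eq
  have hanalytic {c : ℕ → ℝ} (hc : ∀ x > 0, HasSum (fun n => c n * x ^ n) (f x)) :
      AnalyticOnNhd ℝ (ofScalarsSum c) Set.univ :=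
    fun _ _ => (hball hc).analyticAt_of_mem (by simp)
  have hsum : ofScalarsSum a = ofScalarsSum b :=
    (hanalytic ha).eq_of_eventuallyEq (hanalytic hb) ((hf ha).trans (hf hb).symm)
  exact ofScalars_series_injective ℝ ℝ <|
    (hball ha).hasFPowerSeriesAt.eq_formalMultilinearSeries (hsum ▸ (hball hb).hasFPowerSeriesAt)

theorem hasSum_mzv_replicate_four_mul_pow {s : ℝ} (hs : s ≠ 0) :
    HasSum (fun n => mzv (List.replicate n 4) * (4 * s ^ 4) ^ n)
      ((Real.cosh (2 * π * s) - Real.cos (2 * π * s)) / (4 * π ^ 2 * s ^ 2)) := by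
  refine (hasSum_tsum_powersetCard_prod_mul_pow (fun k => by positivity) (by positivity)
    (tendsto_prod_one_add_four_mul_pow_four hs)).congr_fun fun n => ?_
  rw [mzv_eq_tsum_powersetCard _ 4 (by simp), List.length_replicate]

/-- ζ({4}ⁿ) = 2^{2n+1} π^{4n} / (4n+2)!. -/
theorem mzv_four_repeated (n : ℕ) :
    mzv (List.replicate n 4)
      = 2 ^ (2 * n + 1) * Real.pi ^ (4 * n) / (Nat.factorial (4 * n + 2) : ℝ) := by
  have hroot (x : ℝ) (hx : 0 < x) : ∃ s ≠ 0, 4 * s ^ 4 = x :=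
    ⟨(x / 4) ^ ((4 : ℕ) : ℝ)⁻¹, (Real.rpow_pos_of_pos (by positivity) _).ne',
      by rw [Real.rpow_inv_natCast_pow (by positivity) four_ne_zero]; ring⟩
  choose! root hroot_ne hroot_pow using hroot
  have hcoeff : (fun n => mzv (List.replicate n 4))
      = fun n => 2 ^ (2 * n + 1) * π ^ (4 * n) / (4 * n + 2)! := by
    refine eq_of_hasSum_pow_of_pos (f := fun x => (Real.cosh (2 * π * root x)
      - Real.cos (2 * π * root x)) / (4 * π ^ 2 * root x ^ 2)) (fun x hx => ?_) fun x hx => ?_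
    · simpa only [hroot_pow x hx] using hasSum_mzv_replicate_four_mul_pow (hroot_ne x hx)
    · simpa only [hroot_pow x hx] using hasSum_cosh_sub_cos_two_pi_div_sq (hroot_ne x hx)
  exact congrFun hcoeff n
end
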